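/- Let τ be a nonduplicating monotone abstraction of k-register updates such that in the associated graph G (edge i ← j if register j appears in right-hand side i of τ) every vertex is temporary, i.e., no vertex has a self-loop. Then for any list η₁,…,ηₙ of k-register updates over a monoid M all having abstraction τ, with n ≥ k, the product η₁·⋯·ηₙ equals the product of the last k updates η_{n−k+1}·⋯·ηₙ, when both are applied to (i.e., evaluated at) any register valuation. -/

import Mathlib

/-- A `k`-register update over a monoid `M`: a `k`-tuple of words over `M ∪ {1,…,k}`. -/
abbrev RegUpdate (M : Type*) (k : ℕ) := Fin k → List (M ⊕ Fin k)

/-- Substitution of a single letter: monoid letters are kept, register name `j` is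
replaced by the `j`-th right-hand side of `η`. -/
def substLetter {M : Type*} {k : ℕ} (η : RegUpdate M k) : (M ⊕ Fin k) → List (M ⊕ Fin k)
  | .inl m => [.inl m]
  | .inr j => η j

/-- Composition of register updates: `comp η₁ η₂` is obtained from `η₂` by replacing
each occurrence of a register name `j` by the `j`-th right-hand side of `η₁`. -/
def comp {M : Type*} {k : ℕ} (η₁ η₂ : RegUpdate M k) : RegUpdate M k :=
  fun i => (η₂ i).flatMap (substLetter η₁)

/-- The identity register update, whose `i`-th right-hand side is the single-letter
word `[i]`. -/
def idU {M : Type*} {k : ℕ} : RegUpdate M k := fun i => [.inr i]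

/-- Evaluate a word over `M ∪ {1,…,k}` at a register valuation `v`: replace register
name `j` by `v j` and take the product in `M`. -/
def evalWord {M : Type*} [Monoid M] {k : ℕ} (v : Fin k → M) (w : List (M ⊕ Fin k)) : M :=
  (w.map (fun a => match a with | .inl m => m | .inr j => v j)).prod

/-- The right action of a register update on a register valuation. -/
def act {M : Type*} [Monoid M] {k : ℕ} (v : Fin k → M) (η : RegUpdate M k) : Fin k → M :=
  fun i => evalWord v (η i)

/-- The list of register names occurring in a word, in order. -/
def regNames {M : Type*} {k : ℕ} (w : List (M ⊕ Fin k)) : List (Fin k) :=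
  w.filterMap (fun a => match a with | .inl _ => none | .inr j => some j)

/-- The concatenation of all right-hand sides of a register update, in order `1` to `k`. -/
def allRhs {M : Type*} {k : ℕ} (η : RegUpdate M k) : List (M ⊕ Fin k) :=
  (List.ofFn η).flatten

/-- A register update is nonduplicating if each register name appears at most once in
the concatenation of all its right-hand sides. -/
def NonDup {M : Type*} {k : ℕ} (η : RegUpdate M k) : Prop :=
  (regNames (allRhs η)).Nodup

/-- A register update is monotone if the register names appearing in the concatenation
of its right-hand sides do so in strictly increasing order. -/
def Monot {M : Type*} {k : ℕ} (η : RegUpdate M k) : Prop :=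
  List.Pairwise (· < ·) (regNames (allRhs η))

/-- The abstraction of a register update: delete all monoid letters. -/
def absU {M : Type*} {k : ℕ} (η : RegUpdate M k) : Fin k → List (Fin k) :=
  fun i => regNames (η i)

/-- Nonduplicating abstraction. -/
def NonDupA {k : ℕ} (τ : Fin k → List (Fin k)) : Prop := ((List.ofFn τ).flatten).Nodup

/-- Monotone abstraction. -/
def MonotA {k : ℕ} (τ : Fin k → List (Fin k)) : Prop :=
  List.Pairwise (· < ·) ((List.ofFn τ).flatten)

/-- The product of a list of register updates `[η₁,…,ηₙ]`, i.e. `η₁·η₂·⋯·ηₙ`. -/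
def listComp {M : Type*} {k : ℕ} (l : List (RegUpdate M k)) : RegUpdate M k :=
  l.foldl comp idU

section Aux

variable {M : Type*} {k : ℕ}

lemma regNames_cons_inl (m : M) (w : List (M ⊕ Fin k)) :
    regNames (.inl m :: w) = regNames w := rfl

lemma regNames_cons_inr (j : Fin k) (w : List (M ⊕ Fin k)) :
    regNames (.inr j :: w) = j :: regNames w := rfl

lemma regNames_append (w₁ w₂ : List (M ⊕ Fin k)) :
    regNames (w₁ ++ w₂) = regNames w₁ ++ regNames w₂ :=
  List.filterMap_append

lemma regNames_bind_subst (η : RegUpdate M k) (w : List (M ⊕ Fin k)) :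
    regNames (w.flatMap (substLetter η)) = (regNames w).flatMap (fun j => regNames (η j)) := by
  induction w with
  | nil => rfl
  | cons a w ih =>
    cases a with
    | inl m =>
      simp only [List.flatMap_cons, substLetter, regNames_append, regNames_cons_inl, ih]
      rfl
    | inr j =>
      simp only [List.flatMap_cons, substLetter, regNames_append, regNames_cons_inr, ih,
        List.flatMap_cons]

lemma comp_idU_left (η : RegUpdate M k) : comp idU η = η := by
  funext i
  show (η i).flatMap (substLetter idU) = η i
  induction η i with
  | nil => rfl
  | cons a w ih =>
    cases a <;> simp_all [List.flatMap_cons, substLetter, idU]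

lemma comp_idU_right (η : RegUpdate M k) : comp η idU = η := by
  funext i
  show ([.inr i] : List (M ⊕ Fin k)).flatMap (substLetter η) = η i
  simp [substLetter]

lemma comp_assoc (a b c : RegUpdate M k) : comp (comp a b) c = comp a (comp b c) := by
  funext i
  show (c i).flatMap (substLetter (comp a b)) = ((c i).flatMap (substLetter b)).flatMap (substLetter a)
  induction c i with
  | nil => rfl
  | cons x w ih =>
    simp only [List.flatMap_cons, List.flatMap_append, ih]
    congr 1
    cases x with
    | inl m => simp [substLetter]
    | inr j => rfl

lemma foldl_comp_eq (x : RegUpdate M k) (l : List (RegUpdate M k)) :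
    l.foldl comp x = comp x (listComp l) := by
  induction l generalizing x with
  | nil => simp [listComp, comp_idU_right]
  | cons η l ih =>
    show (l.foldl comp (comp x η)) = comp x (listComp (η :: l))
    have h1 : listComp (η :: l) = comp η (listComp l) := by
      show l.foldl comp (comp idU η) = _
      rw [comp_idU_left]; exact ih η
    rw [ih (comp x η), comp_assoc, h1]

lemma listComp_append (a b : List (RegUpdate M k)) :
    listComp (a ++ b) = comp (listComp a) (listComp b) := by
  unfold listComp
  rw [List.foldl_append, foldl_comp_eq]
  rfl

lemma regNames_comp (μ η : RegUpdate M k) (i : Fin k) :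
    regNames (comp μ η i) = (regNames (η i)).flatMap (fun j => regNames (μ j)) :=
  regNames_bind_subst μ (η i)

/-- Every register name in the product of `l` is reached by a chain of length `l.length`. -/
lemma reach_chain (τ : Fin k → List (Fin k)) (l : List (RegUpdate M k))
    (habs : ∀ η ∈ l, absU η = τ) (i j : Fin k)
    (hj : j ∈ regNames (listComp l i)) :
    ∃ c : ℕ → Fin k, c 0 = i ∧ c l.length = j ∧ ∀ s < l.length, c (s + 1) ∈ τ (c s) := by
  induction l using List.reverseRecOn generalizing i with
  | nil =>
    have : j = i := by
      have h : regNames (listComp ([] : List (RegUpdate M k)) i) = [i] := rfl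
      rw [h] at hj
      simpa using hj
    exact ⟨fun _ => i, rfl, by simp [this], by simp⟩
  | append_singleton l η ih =>
    rw [listComp_append] at hj
    have hη : absU η = τ := habs η (by simp)
    have hsingle : listComp [η] = η := by
      show List.foldl comp (comp idU η) [] = η
      simp [comp_idU_left]
    rw [regNames_comp, hsingle] at hj
    rw [show regNames (η i) = τ i from congrFun hη i, List.mem_flatMap] at hj
    obtain ⟨j', hj'τ, hj'⟩ := hj
    obtain ⟨c, hc0, hclen, hcstep⟩ :=
      ih (fun η' h => habs η' (List.mem_append.2 (Or.inl h))) j' hj'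
    refine ⟨fun s => if s = 0 then i else c (s - 1), rfl, ?_, ?_⟩
    · simp only [List.length_append, List.length_singleton]
      have h0 : l.length + 1 ≠ 0 := by omega
      simp only [h0, if_false, Nat.add_sub_cancel, hclen]
    · intro s hs
      simp only [List.length_append, List.length_singleton] at hs
      rcases Nat.eq_zero_or_pos s with rfl | hpos
      · simpa [hc0] using hj'τ
      · have h1 : s ≠ 0 := by omega
        have h2 : s + 1 ≠ 0 := by omega
        simp only [h1, h2, if_false]
        have he : s + 1 - 1 = (s - 1) + 1 := by omega
        rw [he]
        exact hcstep (s - 1) (by omega)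

end Aux

section Key

variable {k : ℕ}

/-- Monotonicity across slots: elements in an earlier slot are smaller. -/
lemma slot_mono {τ : Fin k → List (Fin k)} (hm : MonotA τ)
    {p q x y : Fin k} (hpq : p < q) (hx : x ∈ τ p) (hy : y ∈ τ q) : x < y := by
  have hpair : ((List.ofFn τ).flatten).Pairwise (· < ·) := hm
  rw [List.pairwise_flatten] at hpair
  have h2 := hpair.2
  rw [List.pairwise_iff_get] at h2
  have hp : (p : ℕ) < (List.ofFn τ).length := by simp [p.isLt]
  have hq : (q : ℕ) < (List.ofFn τ).length := by simp [q.isLt]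
  have := h2 ⟨p, hp⟩ ⟨q, hq⟩ (by simpa using hpq)
  simp only [List.get_ofFn] at this
  apply this x _ y
  · simpa using hy
  · simpa using hx

lemma no_chain (τ : Fin k → List (Fin k)) (hk : 1 ≤ k) (hm : MonotA τ)
    (htemp : ∀ i : Fin k, i ∉ τ i)
    (c : ℕ → Fin k) (hc : ∀ s < k, c (s + 1) ∈ τ (c s)) : False := by
  have h01 : c 1 ∈ τ (c 0) := hc 0 hk
  have hne : c 1 ≠ c 0 := fun h => htemp (c 0) (h ▸ h01)
  rcases lt_or_gt_of_ne hne with hlt | hgt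
  · -- decreasing chain
    have mono : ∀ s, s + 1 ≤ k → c (s + 1) < c s := by
      intro s
      induction s with
      | zero => intro _; exact hlt
      | succ s ihs =>
        intro hs1
        have hprev : c (s + 1) < c s := ihs (by omega)
        exact slot_mono hm hprev (hc (s + 1) (by omega)) (hc s (by omega))
    have bound : ∀ s, s ≤ k → (c s).val + s ≤ (c 0).val := by
      intro s
      induction s with
      | zero => simp
      | succ s ihs =>
        intro hs
        have h1 := mono s hs
        have h2 := ihs (by omega)
        have : (c (s + 1)).val < (c s).val := h1
        omega
    have := bound k le_rfl
    have := (c 0).isLt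
    omega
  · -- increasing chain
    have mono : ∀ s, s + 1 ≤ k → c s < c (s + 1) := by
      intro s
      induction s with
      | zero => intro _; exact hgt
      | succ s ihs =>
        intro hs1
        have hprev : c s < c (s + 1) := ihs (by omega)
        exact slot_mono hm hprev (hc s (by omega)) (hc (s + 1) (by omega))
    have bound : ∀ s, s ≤ k → s ≤ (c s).val := by
      intro s
      induction s with
      | zero => simp
      | succ s ihs =>
        intro hs
        have h1 := mono s hs
        have h2 := ihs (by omega)
        have : (c s).val < (c (s + 1)).val := h1
        omega
    have := bound k le_rfl
    have := (c k).isLt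
    omega

end Key

section Final

variable {M : Type*} {k : ℕ}

lemma bind_subst_of_no_regNames (A : RegUpdate M k) (w : List (M ⊕ Fin k))
    (h : regNames w = []) : w.flatMap (substLetter A) = w := by
  induction w with
  | nil => rfl
  | cons a w ih =>
    cases a with
    | inl m =>
      rw [regNames_cons_inl] at h
      simp [List.flatMap_cons, substLetter, ih h]
    | inr j =>
      rw [regNames_cons_inr] at h
      exact absurd h (List.cons_ne_nil _ _)

lemma comp_eq_of_regfree (A B : RegUpdate M k) (h : ∀ i, regNames (B i) = []) :
    comp A B = B := by
  funext i
  exact bind_subst_of_no_regNames A (B i) (h i)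

end Final

/-- Let `τ` be a nonduplicating monotone abstraction in whose associated
graph every vertex is temporary (no self-loops, i.e. register `i` never appears in the
`i`-th right-hand side of `τ`). Then for any list of `n ≥ k` register updates all with
abstraction `τ`, the product of the whole list and the product of its last `k` elements
agree when applied to any register valuation. -/
theorem stmt_15 {M : Type*} [Monoid M] (k : ℕ) (hk : 1 ≤ k)
    (τ : Fin k → List (Fin k)) (hnd : NonDupA τ) (hm : MonotA τ)
    (htemp : ∀ i : Fin k, i ∉ τ i)
    (l : List (RegUpdate M k)) (hlen : k ≤ l.length)
    (habs : ∀ η ∈ l, absU η = τ) :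
    ∀ v : Fin k → M,
      act v (listComp l) = act v (listComp (l.drop (l.length - k))) := by
  intro v
  set pre := l.take (l.length - k) with hpre
  set suf := l.drop (l.length - k) with hsuf
  have hsplit : pre ++ suf = l := List.take_append_drop _ l
  have hsuflen : suf.length = k := by
    rw [hsuf, List.length_drop]
    omega
  have habssuf : ∀ η ∈ suf, absU η = τ := fun η h =>
    habs η (List.mem_of_mem_drop h)
  -- the product of the suffix is register-free
  have hfree : ∀ i, regNames (listComp suf i) = [] := by
    intro i
    rw [List.eq_nil_iff_forall_not_mem]
    intro j hj
    obtain ⟨c, _, _, hcstep⟩ := reach_chain τ suf habssuf i j hj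
    rw [hsuflen] at hcstep
    exact no_chain τ hk hm htemp c hcstep
  have : listComp l = listComp suf := by
    rw [← hsplit, listComp_append, comp_eq_of_regfree _ _ hfree]
  rw [this]
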